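/- Let (Y;S) be a faithful primitive representation of a finite semigroup on a finite set Y with |Y| > 2 and let J be its set of minimal functions. Then for each pair of distinct nonconstant transformations s, t ∈ γ(S) there exist j, k ∈ J such that j∘s ≠ j∘t and s∘k ≠ t∘k. -/

import Mathlib

section TransformationReps

variable {Y : Type*}

/-- A constant function. -/
def IsConst (f : Y → Y) : Prop := ∃ c, ∀ y, f y = c

/-- `W` is a minimal set of the representation given by the set `T` of transformations:
it is a non-singleton image set which is minimal among non-singleton image sets. -/
def MinSet (T : Set (Y → Y)) (W : Set Y) : Prop :=
  2 ≤ W.ncard ∧ (∃ s ∈ T, Set.range s = W) ∧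
    ∀ t ∈ T, 2 ≤ (Set.range t).ncard → Set.range t ⊆ W → Set.range t = W

/-- A minimal function: an element of `T` whose image is a minimal set. -/
def MinFun (T : Set (Y → Y)) (f : Y → Y) : Prop :=
  f ∈ T ∧ MinSet T (Set.range f)

end TransformationReps

/-!
Call a transformation of least rank if its image has least cardinality among the nontrivial
images; such a function is minimal. Composing it with an element of the semigroup on either
side gives a constant or again a function of least rank. Hence the common kernel of the
least-rank functions is a compatible equivalence; it is not universal, so by primitivity it is
the diagonal, and least-rank functions separate points: this gives `j`. Likewise, if `M` is the
union of the images of the least-rank functions, `a ~ b :↔ ∀ u ∈ S¹, (u a ∈ M ↔ u b ∈ M)` is a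
compatible equivalence relating two distinct points of one such image, so it is universal.
Hence `M = Y`, and a point where `s` and `t` differ is `k x` for some least-rank `k`.
-/

open Set

namespace Transformations

variable {Y : Type*} {T : Set (Y → Y)} {f g u : Y → Y}

def IsPrimitive (T : Set (Y → Y)) : Prop :=
  ∀ θ : Y → Y → Prop, Equivalence θ → (∀ a b, θ a b → ∀ u ∈ T, θ (u a) (u b)) →
    (∀ a b, θ a b → a = b) ∨ ∀ a b, θ a b

theorem IsPrimitive.forall_of_ne (hprim : IsPrimitive T) {θ : Y → Y → Prop}
    (hθ : Equivalence θ) (hcompat : ∀ a b, θ a b → ∀ u ∈ T, θ (u a) (u b)) {a b : Y}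
    (hab : θ a b) (hne : a ≠ b) : ∀ x y, θ x y :=
  (hprim θ hθ hcompat).resolve_left fun hdiag => hne (hdiag a b hab)

theorem range_nontrivial_of_not_isConst [Nonempty Y] (hf : ¬ IsConst f) :
    (range f).Nontrivial := by
  obtain ⟨y₀⟩ := ‹Nonempty Y›
  obtain ⟨y₁, hy₁⟩ : ∃ y, f y ≠ f y₀ := by
    by_contra! hconst
    exact hf ⟨f y₀, hconst⟩
  exact ⟨f y₁, mem_range_self y₁, f y₀, mem_range_self y₀, hy₁⟩

def IsMinRank (T : Set (Y → Y)) (f : Y → Y) : Prop :=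
  f ∈ T ∧ (range f).Nontrivial ∧
    ∀ u ∈ T, (range u).Nontrivial → (range f).ncard ≤ (range u).ncard

theorem IsMinRank.of_ncard_le (hf : IsMinRank T f) (hg : g ∈ T) (hgnt : (range g).Nontrivial)
    (hle : (range g).ncard ≤ (range f).ncard) : IsMinRank T g :=
  ⟨hg, hgnt, fun u hu hunt => hle.trans (hf.2.2 u hu hunt)⟩

section Finite

variable [Finite Y]

theorem exists_isMinRank (hu : u ∈ T) (hunt : (range u).Nontrivial) : ∃ f, IsMinRank T f := by
  obtain ⟨f, ⟨hfT, hfnt⟩, hmin⟩ := exists_min_image {v | v ∈ T ∧ (range v).Nontrivial}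
    (fun v => (range v).ncard) (toFinite _) ⟨u, hu, hunt⟩
  exact ⟨f, hfT, hfnt, fun v hv hvnt => hmin v ⟨hv, hvnt⟩⟩

theorem IsMinRank.minFun (hf : IsMinRank T f) : MinFun T f := by
  obtain ⟨hfT, hfnt, hmin⟩ := hf
  refine ⟨hfT, one_lt_ncard_iff_nontrivial.2 hfnt, ⟨f, hfT, rfl⟩, fun v hv hv2 hsub => ?_⟩
  exact eq_of_subset_of_ncard_le hsub (hmin v hv (one_lt_ncard_iff_nontrivial.1 hv2))

theorem IsMinRank.comp_left (hcomp : ∀ u ∈ T, ∀ v ∈ T, u ∘ v ∈ T) (hf : IsMinRank T f)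
    (hu : u ∈ T) : (range (u ∘ f)).Subsingleton ∨ IsMinRank T (u ∘ f) := by
  refine (range _).subsingleton_or_nontrivial.imp_right fun hnt =>
    hf.of_ncard_le (hcomp u hu f hf.1) hnt ?_
  rw [range_comp]
  exact ncard_image_le

theorem IsMinRank.comp_right (hcomp : ∀ u ∈ T, ∀ v ∈ T, u ∘ v ∈ T) (hf : IsMinRank T f)
    (hu : u ∈ T) : (range (f ∘ u)).Subsingleton ∨ IsMinRank T (f ∘ u) :=
  (range _).subsingleton_or_nontrivial.imp_right fun hnt =>
    hf.of_ncard_le (hcomp f hf.1 u hu) hnt (ncard_le_ncard (range_comp_subset_range u f))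

theorem exists_isMinRank_apply_ne (hcomp : ∀ u ∈ T, ∀ v ∈ T, u ∘ v ∈ T)
    (hprim : IsPrimitive T) (hf : IsMinRank T f) {a b : Y} (hab : a ≠ b) :
    ∃ j, IsMinRank T j ∧ j a ≠ j b := by
  by_contra! hker
  let θ : Y → Y → Prop := fun x y => ∀ j, IsMinRank T j → j x = j y
  have hθ : Equivalence θ :=
    ⟨fun _ _ _ => rfl, fun h j hj => (h j hj).symm, fun h₁ h₂ j hj => (h₁ j hj).trans (h₂ j hj)⟩
  have hcompat : ∀ x y, θ x y → ∀ u ∈ T, θ (u x) (u y) := by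
    intro x y hxy u hu j hj
    rcases hj.comp_right hcomp hu with hconst | hmin
    · exact hconst (mem_range_self x) (mem_range_self y)
    · exact hxy _ hmin
  obtain ⟨_, ⟨x, rfl⟩, _, ⟨y, rfl⟩, hxy⟩ := hf.2.1
  exact hxy (hprim.forall_of_ne hθ hcompat hker hab x y f hf)

theorem exists_isMinRank_mem_range (hcomp : ∀ u ∈ T, ∀ v ∈ T, u ∘ v ∈ T)
    (hprim : IsPrimitive T) (hf : IsMinRank T f) (y : Y) :
    ∃ k, IsMinRank T k ∧ y ∈ range k := by
  let M : Set Y := {z | ∃ k, IsMinRank T k ∧ z ∈ range k}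
  let θ : Y → Y → Prop := fun a b => ∀ u ∈ insert id T, (u a ∈ M ↔ u b ∈ M)
  have hθ : Equivalence θ :=
    ⟨fun _ _ _ => Iff.rfl, fun h u hu => (h u hu).symm, fun h₁ h₂ u hu => (h₁ u hu).trans (h₂ u hu)⟩
  have hcompat : ∀ a b, θ a b → ∀ v ∈ T, θ (v a) (v b) := by
    rintro a b hab v hv u (rfl | hu)
    · exact hab v (Or.inr hv)
    · exact hab (u ∘ v) (Or.inr (hcomp u hu v hv))
  obtain ⟨_, ⟨x, rfl⟩, _, ⟨x', rfl⟩, hxx'⟩ := hf.2.1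
  have hrel : θ (f x) (f x') := by
    rintro u (rfl | hu)
    · exact iff_of_true ⟨f, hf, x, rfl⟩ ⟨f, hf, x', rfl⟩
    · rcases hf.comp_left hcomp hu with hconst | hmin
      · exact iff_of_eq (congrArg (· ∈ M) (hconst (mem_range_self x) (mem_range_self x')))
      · exact iff_of_true ⟨_, hmin, x, rfl⟩ ⟨_, hmin, x', rfl⟩
  exact (hprim.forall_of_ne hθ hcompat hrel hxx' y (f x) id (mem_insert _ _)).2 ⟨f, hf, x, rfl⟩

end Finite

end Transformations

open Transformations in
theorem minimal_functions_separate_semigroup_general {S Y : Type*} [Semigroup S]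
    [Fintype Y] (γ : S → Y → Y) (hγ : ∀ s t : S, γ (s * t) = γ s ∘ γ t)
    (hprim : ∀ θ : Y → Y → Prop, Equivalence θ →
      (∀ a b, θ a b → ∀ s : S, θ (γ s a) (γ s b)) →
      (∀ a b, θ a b → a = b) ∨ (∀ a b, θ a b)) :
    ∀ s ∈ Set.range γ, ∀ t ∈ Set.range γ, s ≠ t → ¬ IsConst s → ¬ IsConst t →
      ∃ j k : Y → Y, MinFun (Set.range γ) j ∧ MinFun (Set.range γ) k ∧
        j ∘ s ≠ j ∘ t ∧ s ∘ k ≠ t ∘ k := by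
  intro s hs t _ hst hncs _
  obtain ⟨y, hy⟩ := Function.ne_iff.mp hst
  have : Nonempty Y := ⟨y⟩
  have hcomp : ∀ u ∈ range γ, ∀ v ∈ range γ, u ∘ v ∈ range γ := by
    rintro _ ⟨a, rfl⟩ _ ⟨b, rfl⟩
    exact ⟨a * b, hγ a b⟩
  have hprim' : IsPrimitive (range γ) := fun θ hθ hcompat =>
    hprim θ hθ fun a b hab v => hcompat a b hab (γ v) (mem_range_self v)
  obtain ⟨f, hf⟩ := exists_isMinRank hs (range_nontrivial_of_not_isConst hncs)
  obtain ⟨j, hj, hjy⟩ := exists_isMinRank_apply_ne hcomp hprim' hf hy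
  obtain ⟨k, hk, x, rfl⟩ := exists_isMinRank_mem_range hcomp hprim' hf y
  exact ⟨j, k, hj.minFun, hk.minFun, fun h => hjy (congrFun h _), fun h => hy (congrFun h x)⟩

/-- Let `(Y;S)` be a faithful primitive representation with `|Y| > 2` and `J` its set of
minimal functions.  For distinct nonconstant transformations `s, t ∈ γ(S)` there exist
`j, k ∈ J` with `j∘s ≠ j∘t` and `s∘k ≠ t∘k`. -/
theorem minimal_functions_separate_semigroup {S Y : Type*} [Semigroup S] [Fintype S]
    [Fintype Y] (γ : S → Y → Y) (hγ : ∀ s t : S, γ (s * t) = γ s ∘ γ t)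
    (hfaithful : Function.Injective γ)
    (hcard : 2 < Fintype.card Y)
    (hprim : ∀ θ : Y → Y → Prop, Equivalence θ →
      (∀ a b, θ a b → ∀ s : S, θ (γ s a) (γ s b)) →
      (∀ a b, θ a b → a = b) ∨ (∀ a b, θ a b)) :
    ∀ s ∈ Set.range γ, ∀ t ∈ Set.range γ, s ≠ t → ¬ IsConst s → ¬ IsConst t →
      ∃ j k : Y → Y, MinFun (Set.range γ) j ∧ MinFun (Set.range γ) k ∧
        j ∘ s ≠ j ∘ t ∧ s ∘ k ≠ t ∘ k :=
  minimal_functions_separate_semigroup_general γ hγ hprim
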